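/- Let M, a, s be positive integers with M > 1 such that ∑_{i=0}^{M-1} (a+i)^2 = s^2. If M = 24·m₁ for a positive integer m₁, then m₁ ≢ 2 (mod 3). -/

import Mathlib

open Finset

theorem sq_mod_three_ne_two (s : ℕ) : s ^ 2 % 3 ≠ 2 := by
  rw [Nat.pow_mod]
  have : s % 3 < 3 := Nat.mod_lt s (by norm_num)
  interval_cases s % 3 <;> norm_num

/-- Three consecutive squares sum to `3a² + 6a + 5 ≡ 2 (mod 3)`. -/
theorem sum_range_three_mul_sq_modEq (a n : ℕ) :
    ∑ i ∈ range (3 * n), (a + i) ^ 2 ≡ 2 * n [MOD 3] := by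
  induction n with
  | zero => rfl
  | succ n ih =>
    have block : (a + 3 * n) ^ 2 + (a + (3 * n + 1)) ^ 2 + (a + (3 * n + 2)) ^ 2
        = 3 * ((a + 3 * n) ^ 2 + 2 * (a + 3 * n) + 1) + 2 := by ring
    rw [show 3 * (n + 1) = 3 * n + 2 + 1 by ring, sum_range_succ, sum_range_succ,
      sum_range_succ, add_assoc, add_assoc, mul_add]
    refine ih.add ?_
    unfold Nat.ModEq
    omega

theorem stmt_general (M a s m₁ : ℕ)
    (hsum : ∑ i ∈ Finset.range M, (a + i) ^ 2 = s ^ 2)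
    (hMeq : M = 24 * m₁) :
    ¬ m₁ % 3 = 2 := by
  intro hm₁
  have hs : s ^ 2 ≡ 2 * (8 * m₁) [MOD 3] := by
    rw [← hsum, hMeq, show 24 * m₁ = 3 * (8 * m₁) by ring]
    exact sum_range_three_mul_sq_modEq a (8 * m₁)
  exact sq_mod_three_ne_two s (by rw [hs]; omega)

theorem stmt (M a s m₁ : ℕ) (hM : 1 < M) (ha : 1 ≤ a) (hs : 1 ≤ s)
    (hsum : ∑ i ∈ Finset.range M, (a + i) ^ 2 = s ^ 2)
    (hm : 1 ≤ m₁) (hMeq : M = 24 * m₁) :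
    ¬ m₁ % 3 = 2 :=
  stmt_general M a s m₁ hsum hMeq
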